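/- arXiv:1707.01278 — 3 statements merged into one kernel-verified Lean document; each statement's English description precedes it below -/
import Mathlib

section
/- Let P₁,...,P_k be the flow-carrying paths of a flow f in a single-commodity congestion game with homogeneous sensitivity γ = 1, with latencies ordered l_{P₁}(f) ≤ ... ≤ l_{P_k}(f), and suppose f is a β-approximate Nash flow: l_{P_k}(f) ≤ (1+β)·l_Q(f) for every path Q (in particular every flow-carrying path). Define δ_{P_i}(f) = l_{P_k}(f) − l_{P_i}(f) for i = 1,...,k and δ_Q(f) = β·l_Q(f) for all non-flow-carrying paths Q. Then: (a) 0 ≤ δ_{P_i}(f) ≤ β·l_{P_i}(f) for all i; (b) l_{P_i}(f) + δ_{P_i}(f) = l_{P_j}(f) + δ_{P_j}(f) for all i,j ∈ {1,...,k}; and (c) l_{P_i}(f) + δ_{P_i}(f) ≤ l_Q(f) + δ_Q(f) for every non-flow-carrying path Q. Hence f is a β-deviated Nash flow for these deviations. -/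
theorem stmt_4 (S : Type*) (f l : S → ℝ) (β : ℝ)
    (hβ : 0 ≤ β) (hl : ∀ P, 0 ≤ l P)
    (Pk : S) (hPk : 0 < f Pk)
    (hmax : ∀ P, 0 < f P → l P ≤ l Pk)
    (hNash : ∀ Q : S, l Pk ≤ (1 + β) * l Q)
    (δ : S → ℝ)
    (hδ_def : ∀ P, δ P = if 0 < f P then l Pk - l P else β * l P) :
    (∀ P, 0 < f P → 0 ≤ δ P ∧ δ P ≤ β * l P) ∧
    (∀ P P', 0 < f P → 0 < f P' → l P + δ P = l P' + δ P') ∧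
    (∀ P Q, 0 < f P → ¬ (0 < f Q) → l P + δ P ≤ l Q + δ Q) := by
  refine ⟨fun P hP => ?_, fun P P' hP hP' => ?_, fun P Q hP hQ => ?_⟩
  · rw [hδ_def P, if_pos hP]
    constructor
    · linarith [hmax P hP]
    · have := hNash P; nlinarith
  · rw [hδ_def P, if_pos hP, hδ_def P', if_pos hP']; ring
  · rw [hδ_def P, if_pos hP, hδ_def Q, if_neg hQ]
    have := hNash Q; nlinarith
end

section
/- Let h ≥ 1, r₁,...,r_h ≥ 0 with Σ_j r_j = 1, and 0 ≤ γ₁ < ... < γ_h. Let L₀ ≥ 0 and δ₀ ≥ δ₁ ≥ ... ≥ δ_h ≥ 0 with δ₀ ≤ β·L₀ for some β ≥ 0. Suppose L_j ≤ L₀ + γ₁·δ₀ + Σ_{g=1}^{j-1}(γ_{g+1}−γ_g)·δ_g − γ_j·δ_j for each j ∈ {1,...,h}. Then Σ_{j=1}^h r_j·L_j ≤ (1 + β·max_{j∈{1,...,h}} { γ_j·Σ_{p=j}^h r_p })·L₀. -/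
/-!
Each bound on `L j` telescopes, by summation by parts, to
`L 0 + ∑_{g ≤ j} γ g (δ (g - 1) - δ g)`. Averaging with the weights `r j` and exchanging the
order of summation gives `L 0 + ∑_g (γ g ∑_{p ≥ g} r p)(δ (g - 1) - δ g)`. The increments
`δ (g - 1) - δ g` are nonnegative, so bounding every coefficient by their maximum `M` leaves
`L 0 + M (δ 0 - δ h) ≤ L 0 + M β L 0`.
-/

open Finset

theorem sum_Icc_one_sub_pred {R : Type*} [AddCommGroup R] (δ : ℕ → R) (h : ℕ) :
    ∑ g ∈ Icc 1 h, (δ (g - 1) - δ g) = δ 0 - δ h := by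
  induction h with
  | zero => simp
  | succ n ih =>
    rw [sum_Icc_succ_top (by omega), ih, Nat.add_sub_cancel]
    abel

theorem summation_by_parts_Icc_one {R : Type*} [CommRing R] (γ δ : ℕ → R) {j : ℕ}
    (hj : 1 ≤ j) :
    γ 1 * δ 0 + ∑ g ∈ Icc 1 (j - 1), (γ (g + 1) - γ g) * δ g - γ j * δ j =
      ∑ g ∈ Icc 1 j, γ g * (δ (g - 1) - δ g) := by
  induction j, hj using Nat.le_induction with
  | base => simp; ring
  | succ n hn ih =>
    obtain ⟨m, rfl⟩ : ∃ m, n = m + 1 := ⟨n - 1, by omega⟩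
    rw [Nat.add_sub_cancel, sum_Icc_succ_top (by omega), sum_Icc_succ_top (by omega), ← ih,
      Nat.add_sub_cancel, Nat.add_sub_cancel]
    ring

theorem sum_Icc_mul_sum_Icc_one_comm {R : Type*} [CommSemiring R] (r f : ℕ → R) (h : ℕ) :
    ∑ j ∈ Icc 1 h, r j * ∑ g ∈ Icc 1 j, f g =
      ∑ g ∈ Icc 1 h, (∑ p ∈ Icc g h, r p) * f g := by
  simp_rw [mul_sum, sum_mul]
  exact sum_comm' fun j g => by simp only [mem_Icc]; omega

theorem sum_mul_sub_pred_le_of_le {R : Type*} [CommRing R] [PartialOrder R] [IsOrderedRing R]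
    {c τ : ℕ → R} {h : ℕ} {M : R} (hc : ∀ g ∈ Icc 1 h, c g ≤ M)
    (hτ : ∀ g ∈ Icc 1 h, τ g ≤ τ (g - 1)) :
    ∑ g ∈ Icc 1 h, c g * (τ (g - 1) - τ g) ≤ M * (τ 0 - τ h) := by
  rw [← sum_Icc_one_sub_pred τ h, mul_sum]
  exact sum_le_sum fun g hg =>
    mul_le_mul_of_nonneg_right (hc g hg) (sub_nonneg.mpr (hτ g hg))

theorem stmt_7_general (h : ℕ) (hh : 1 ≤ h) (β : ℝ)
    (r γ L δ : ℕ → ℝ)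
    (hr : ∀ j, 1 ≤ j → j ≤ h → 0 ≤ r j)
    (hrsum : ∑ j ∈ Finset.Icc 1 h, r j = 1)
    (hγ0 : 0 ≤ γ 1)
    (hδmono : ∀ i j, i ≤ j → j ≤ h → δ j ≤ δ i)
    (hδh : 0 ≤ δ h)
    (hδ0 : δ 0 ≤ β * L 0)
    (hL : ∀ j, 1 ≤ j → j ≤ h →
      L j ≤ L 0 + γ 1 * δ 0 +
        (∑ g ∈ Finset.Icc 1 (j - 1), (γ (g + 1) - γ g) * δ g) - γ j * δ j) :
    ∑ j ∈ Finset.Icc 1 h, r j * L j ≤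
      (1 + β * (Finset.Icc 1 h).sup' (Finset.nonempty_Icc.mpr hh)
        (fun j => γ j * ∑ p ∈ Finset.Icc j h, r p)) * L 0 := by
  set M := (Icc 1 h).sup' (nonempty_Icc.mpr hh) fun j => γ j * ∑ p ∈ Icc j h, r p
  have hM : ∀ j ∈ Icc 1 h, γ j * ∑ p ∈ Icc j h, r p ≤ M := fun j hj =>
    le_sup' (fun j => γ j * ∑ p ∈ Icc j h, r p) hj
  have hM0 : 0 ≤ M := by
    have := hM 1 (mem_Icc.mpr ⟨le_rfl, hh⟩)
    rw [hrsum, mul_one] at this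
    exact hγ0.trans this
  have hLj : ∀ j ∈ Icc 1 h,
      r j * L j ≤ r j * (L 0 + ∑ g ∈ Icc 1 j, γ g * (δ (g - 1) - δ g)) := by
    intro j hj
    obtain ⟨hj1, hjh⟩ := mem_Icc.mp hj
    rw [← summation_by_parts_Icc_one γ δ hj1, ← add_sub_assoc, ← add_assoc]
    exact mul_le_mul_of_nonneg_left (hL j hj1 hjh) (hr j hj1 hjh)
  calc ∑ j ∈ Icc 1 h, r j * L j
      ≤ ∑ j ∈ Icc 1 h, r j * (L 0 + ∑ g ∈ Icc 1 j, γ g * (δ (g - 1) - δ g)) :=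
        sum_le_sum hLj
    _ = L 0 + ∑ g ∈ Icc 1 h, (γ g * ∑ p ∈ Icc g h, r p) * (δ (g - 1) - δ g) := by
      simp_rw [mul_add, sum_add_distrib, ← sum_mul, hrsum, one_mul,
        sum_Icc_mul_sum_Icc_one_comm, mul_left_comm, ← mul_assoc]
    _ ≤ L 0 + M * (δ 0 - δ h) := by
      gcongr
      exact sum_mul_sub_pred_le_of_le hM fun g hg => hδmono _ _ (by omega) (mem_Icc.mp hg).2
    _ ≤ (1 + β * M) * L 0 := by nlinarith [mul_le_mul_of_nonneg_left hδ0 hM0]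

theorem stmt_7 (h : ℕ) (hh : 1 ≤ h) (β : ℝ) (hβ : 0 ≤ β)
    (r γ L δ : ℕ → ℝ)
    (hr : ∀ j, 1 ≤ j → j ≤ h → 0 ≤ r j)
    (hrsum : ∑ j ∈ Finset.Icc 1 h, r j = 1)
    (hγ0 : 0 ≤ γ 1)
    (hγmono : ∀ i j, 1 ≤ i → i < j → j ≤ h → γ i < γ j)
    (hL0 : 0 ≤ L 0)
    (hδmono : ∀ i j, i ≤ j → j ≤ h → δ j ≤ δ i)
    (hδh : 0 ≤ δ h)
    (hδ0 : δ 0 ≤ β * L 0)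
    (hL : ∀ j, 1 ≤ j → j ≤ h →
      L j ≤ L 0 + γ 1 * δ 0 +
        (∑ g ∈ Finset.Icc 1 (j - 1), (γ (g + 1) - γ g) * δ g) - γ j * δ j) :
    ∑ j ∈ Finset.Icc 1 h, r j * L j ≤
      (1 + β * (Finset.Icc 1 h).sup' (Finset.nonempty_Icc.mpr hh)
        (fun j => γ j * ∑ p ∈ Finset.Icc j h, r p)) * L 0 :=
  stmt_7_general h hh β r γ L δ hr hrsum hγ0 hδmono hδh hδ0 hL
end

section
/- Let h ≥ 1, β ≥ 0, r₁,...,r_h > 0 with Σ r_j = 1, and 0 ≤ γ₁ < ... < γ_h. Consider a two-resource instance with r = 1 total demand: resource 1 has constant latency l₁(y) = 1 and deviation δ₁(y) = β; resource 2 has deviation δ₂ ≡ 0 and a strictly increasing continuous latency l₂ with l₂(0) = 1 + ε' and l₂(r_j + ... + r_h) = 1 + γ_j·β, where 0 < ε' < γ_j·β, for a fixed j. Then the flow x = (x₁, x₂) = (r₁+...+r_{j−1}, r_j+...+r_h), in which classes 1,...,j−1 use resource 1 and classes j,...,h use resource 2, is a β-deviated Nash flow: for every class i < j, l₁(x₁)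 + γ_i·δ₁(x₁) ≤ l₂(x₂) + γ_i·δ₂(x₂), and for every class i ≥ j, l₂(x₂) + γ_i·δ₂(x₂) ≤ l₁(x₁) + γ_i·δ₁(x₁). -/
lemma monotoneOn_Icc_of_forall_lt {α : Type*} [Preorder α] {f : ℕ → α} {a b : ℕ}
    (hf : ∀ i i', a ≤ i → i < i' → i' ≤ b → f i < f i') : MonotoneOn f (Set.Icc a b) := by
  intro i hi i' hi' hii'
  rcases hii'.eq_or_lt with rfl | hlt
  · exact le_rfl
  · exact (hf i i' hi.1 hlt hi'.2).le

theorem stmt_17_general (h : ℕ) (β : ℝ) (hβ : 0 ≤ β)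
    (r γ : ℕ → ℝ)
    (hγmono : ∀ i i', 1 ≤ i → i < i' → i' ≤ h → γ i < γ i')
    (j : ℕ) (hj1 : 1 ≤ j) (hjh : j ≤ h)
    (l₂ : ℝ → ℝ)
    (hl₂x : l₂ (∑ p ∈ Finset.Icc j h, r p) = 1 + γ j * β) :
    (∀ i, 1 ≤ i → i < j →
      1 + γ i * β ≤ l₂ (∑ p ∈ Finset.Icc j h, r p) + γ i * 0) ∧
    (∀ i, j ≤ i → i ≤ h →
      l₂ (∑ p ∈ Finset.Icc j h, r p) + γ i * 0 ≤ 1 + γ i * β) := by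
  have hγ : MonotoneOn γ (Set.Icc 1 h) := monotoneOn_Icc_of_forall_lt hγmono
  have hj : j ∈ Set.Icc 1 h := ⟨hj1, hjh⟩
  simp only [hl₂x, mul_zero, add_zero]
  refine ⟨fun i hi hij => ?_, fun i hji hih => ?_⟩
  · gcongr
    exact hγ ⟨hi, by omega⟩ hj hij.le
  · gcongr
    exact hγ hj ⟨by omega, hih⟩ hji

theorem stmt_17 (h : ℕ) (hh : 1 ≤ h) (β : ℝ) (hβ : 0 ≤ β)
    (r γ : ℕ → ℝ)
    (hr : ∀ i, 1 ≤ i → i ≤ h → 0 < r i)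
    (hrsum : ∑ i ∈ Finset.Icc 1 h, r i = 1)
    (hγ0 : 0 ≤ γ 1)
    (hγmono : ∀ i i', 1 ≤ i → i < i' → i' ≤ h → γ i < γ i')
    (j : ℕ) (hj1 : 1 ≤ j) (hjh : j ≤ h)
    (ε' : ℝ) (hε'0 : 0 < ε') (hε' : ε' < γ j * β)
    (l₂ : ℝ → ℝ) (hl₂mono : StrictMono l₂) (hl₂cont : Continuous l₂)
    (hl₂0 : l₂ 0 = 1 + ε')
    (hl₂x : l₂ (∑ p ∈ Finset.Icc j h, r p) = 1 + γ j * β) :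
    (∀ i, 1 ≤ i → i < j →
      1 + γ i * β ≤ l₂ (∑ p ∈ Finset.Icc j h, r p) + γ i * 0) ∧
    (∀ i, j ≤ i → i ≤ h →
      l₂ (∑ p ∈ Finset.Icc j h, r p) + γ i * 0 ≤ 1 + γ i * β) :=
  stmt_17_general h β hβ r γ hγmono j hj1 hjh l₂ hl₂x
end
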